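/- arXiv:2405.12680 — 2 statements merged into one kernel-verified Lean document; each statement's English description precedes it below -/
import Mathlib

section
/- Let p be an odd prime and c_1, ..., c_n nonzero integers with |c_1|, ..., |c_n| pairwise distinct (i.e., c_i ≠ c_j and c_i ≠ -c_j for i ≠ j). Then the n×n matrix with (i,j)-entry c_j^{p^{i-1}} has nonzero determinant. -/
/-!
If the determinant vanished, a nonzero vector `v` in the left kernel would give the polynomial
`f = ∑ vᵢ X^(pⁱ)` with at most `n` nonzero coefficients and roots `c₁, …, cₙ`. The exponents are
odd, so `f` is an odd function and also vanishes at the `n` distinct positive numbers `|cⱼ|`. By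
Descartes' rule of signs a nonzero polynomial with at most `n` nonzero coefficients has at most
`n - 1` sign changes, hence at most `n - 1` positive roots.
-/

open Finset Function

namespace Polynomial

section Semiring

variable {R : Type*} [Semiring R]

theorem coeff_sum_C_mul_X_pow_of_injective {ι : Type*} [Fintype ι] {k : ι → ℕ}
    (hk : Injective k) (v : ι → R) (i : ι) : (∑ j, C (v j) * X ^ k j).coeff (k i) = v i := by
  classical
  simp only [finsetSum_coeff, coeff_C_mul_X_pow, hk.eq_iff, Fintype.sum_ite_eq]

theorem card_support_sum_C_mul_X_pow_le {ι : Type*} [Fintype ι] (k : ι → ℕ) (v : ι → R) :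
    #(∑ i, C (v i) * X ^ k i).support ≤ Fintype.card ι := by
  classical
  calc #(∑ i, C (v i) * X ^ k i).support ≤ #(univ.image k) := by
        refine card_le_card fun d hd => ?_
        rw [mem_support_iff, finsetSum_coeff] at hd
        obtain ⟨i, -, hi⟩ := exists_ne_zero_of_sum_ne_zero hd
        rw [coeff_C_mul_X_pow] at hi
        exact mem_image.mpr ⟨i, mem_univ i, (ite_ne_right_iff.mp hi).1.symm⟩
    _ ≤ Fintype.card ι := card_image_le

variable [LinearOrder R]

theorem signVariations_lt_card_support {P : R[X]} (hP : P ≠ 0) :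
    P.signVariations < #P.support := by
  induction h : #P.support generalizing P with
  | zero => exact absurd (card_support_eq_zero.mp h) hP
  | succ m ih =>
    by_cases hE : P.eraseLead = 0
    · rw [← eraseLead_add_monomial_natDegree_leadingCoeff P, hE, zero_add,
        signVariations_monomial]
      omega
    · have := ih hE (by rw [← card_support_eraseLead_add_one hP] at h; omega)
      have := signVariations_le_eraseLead_succ P
      omega

end Semiring

theorem card_lt_card_support_of_forall_pos_isRoot {R : Type*} [CommRing R] [LinearOrder R]
    [IsStrictOrderedRing R] {P : R[X]} (hP : P ≠ 0) {s : Finset R}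
    (hs : ∀ x ∈ s, 0 < x ∧ P.IsRoot x) : #s < #P.support :=
  calc #s = s.val.countP (0 < ·) := (Multiset.countP_eq_card.mpr fun x hx => (hs x hx).1).symm
    _ ≤ P.roots.countP (0 < ·) := Multiset.countP_le_of_le _
          ((Multiset.le_iff_subset s.nodup).mpr fun x hx => (mem_roots hP).mpr (hs x hx).2)
    _ ≤ P.signVariations := roots_countP_pos_le_signVariations P
    _ < #P.support := signVariations_lt_card_support hP

theorem eval_neg_sum_C_mul_X_pow_of_odd {R : Type*} [Ring R] {ι : Type*} [Fintype ι]
    {k : ι → ℕ} (hk : ∀ i, Odd (k i)) (v : ι → R) (x : R) :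
    (∑ i, C (v i) * X ^ k i).eval (-x) = -(∑ i, C (v i) * X ^ k i).eval x := by
  simp only [eval_finsetSum, eval_C_mul, eval_X_pow, (hk _).neg_pow, mul_neg,
    Finset.sum_neg_distrib]

end Polynomial

open Polynomial in
theorem stmt_1 (p : ℕ) (hp : p.Prime) (hodd : p ≠ 2) (n : ℕ) (c : Fin n → ℤ)
    (hne : ∀ i, c i ≠ 0)
    (habs : ∀ i j : Fin n, i ≠ j → c i ≠ c j ∧ c i ≠ -c j) :
    (Matrix.of (fun i j : Fin n => c j ^ p ^ (i : ℕ))).det ≠ 0 := by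
  intro hdet
  obtain ⟨v, hv0, hv⟩ := Matrix.exists_vecMul_eq_zero_iff.mpr hdet
  set f : ℤ[X] := ∑ i : Fin n, C (v i) * X ^ p ^ (i : ℕ)
  have hk : Injective fun i : Fin n => p ^ (i : ℕ) :=
    (Nat.pow_right_injective hp.two_le).comp Fin.val_injective
  have hf0 : f ≠ 0 := fun hf => hv0 <| funext fun i => by
    rw [← coeff_sum_C_mul_X_pow_of_injective hk v i]
    exact congrArg (coeff · _) hf
  have hroot : ∀ j, f.IsRoot (c j) := fun j => by
    simpa [f, Matrix.vecMul, dotProduct, eval_finsetSum] using congrFun hv j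
  have hroot_abs : ∀ j, f.IsRoot |c j| := fun j => by
    rcases abs_choice (c j) with h | h <;> rw [h]
    · exact hroot j
    · rw [IsRoot, eval_neg_sum_C_mul_X_pow_of_odd (fun i => (hp.odd_of_ne_two hodd).pow),
        (hroot j).eq_zero, neg_zero]
  have habs_inj : Injective fun j => |c j| := fun i j hij => by
    by_contra hij'
    rcases abs_eq_abs.mp hij with h | h
    exacts [(habs i j hij').1 h, (habs i j hij').2 h]
  have hlt := card_lt_card_support_of_forall_pos_isRoot hf0 (s := univ.image fun j => |c j|)
    (by simpa using fun j => ⟨hne j, hroot_abs j⟩)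
  rw [card_image_of_injective _ habs_inj, card_univ] at hlt
  exact hlt.not_ge (card_support_sum_C_mul_X_pow_le _ v)
end

section
/- Let p be an odd prime and A a commutative polynomial ring over Z. Suppose α = Σ_{i=1}^ℓ c_i V^{0}⟨a_i⟩ = 0 in X(A) ⊆ A^ℕ, where the a_i ∈ A are nonzero, pairwise distinct, and satisfy a_i ≠ -a_j for i ≠ j, and c_i ∈ Z. Then c_i = 0 for all i. -/
/-!
Specialising the variables to a suitable integer point keeps the `a i` nonzero with pairwise
distinct absolute values. For nonzero `y i` of pairwise distinct norms, a relation
`∑ c i * y i ^ e = 0` holding along exponents `e → ∞` forces the coefficient of the `y i` of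
largest norm to vanish: after dividing by its `e`-th power, every other term tends to zero.
Induction on the number of terms finishes the argument.
-/

open Filter Topology Finset

theorem MvPolynomial.exists_forall_eval_ne_zero {R σ : Type*} [CommRing R] [IsDomain R]
    [Infinite R] (F : Finset (MvPolynomial σ R)) (hF : 0 ∉ F) :
    ∃ x : σ → R, ∀ f ∈ F, eval x f ≠ 0 := by
  have hprod : ∏ f ∈ F, f ≠ 0 := prod_ne_zero_iff.2 fun f hf h => hF (h ▸ hf)
  obtain ⟨x, hx⟩ : ∃ x : σ → R, eval x (∏ f ∈ F, f) ≠ 0 := by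
    by_contra! h
    exact hprod (MvPolynomial.funext fun x => by simpa using h x)
  exact ⟨x, prod_ne_zero_iff.1 (by simpa only [map_prod] using hx)⟩

theorem Finset.eq_zero_of_forall_sum_mul_pow_eq_zero {ι 𝕜 : Type*} [NormedField 𝕜]
    (s : Finset ι) {c y : ι → 𝕜} (hy : ∀ i ∈ s, y i ≠ 0) (hinj : Set.InjOn (‖y ·‖) s)
    {e : ℕ → ℕ} (he : Tendsto e atTop atTop) (hsum : ∀ k, ∑ i ∈ s, c i * y i ^ e k = 0) :
    ∀ i ∈ s, c i = 0 := by
  classical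
  induction s using Finset.induction_on_max_value (‖y ·‖) with
  | empty => simp
  | insert a s ha hmax ih =>
    rw [coe_insert] at hinj
    have hya : y a ≠ 0 := hy a (mem_insert_self a s)
    have hlt : ∀ i ∈ s, ‖y i / y a‖ < 1 := by
      intro i hi
      have hne : ‖y i‖ ≠ ‖y a‖ := fun h =>
        ha (hinj (Set.mem_insert_of_mem a hi) (Set.mem_insert a _) h ▸ hi)
      rw [norm_div, div_lt_one (norm_pos_iff.2 hya)]
      exact (hmax i hi).lt_of_ne hne
    have hca_eq : ∀ k, c a = -∑ i ∈ s, c i * (y i / y a) ^ e k := by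
      intro k
      have h := hsum k
      rw [sum_insert ha] at h
      have hpow : y a ^ e k ≠ 0 := pow_ne_zero _ hya
      simp_rw [div_pow, ← mul_div_assoc, ← sum_div]
      field_simp
      linear_combination h
    have hlim : Tendsto (fun k => -∑ i ∈ s, c i * (y i / y a) ^ e k) atTop (𝓝 0) := by
      simpa using (tendsto_finsetSum s fun i hi =>
        ((tendsto_pow_atTop_nhds_zero_of_norm_lt_one (hlt i hi)).comp he).const_mul (c i)).neg
    have hca : c a = 0 :=
      tendsto_nhds_unique tendsto_const_nhds (hlim.congr fun k => (hca_eq k).symm)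
    have hs := ih (fun i hi => hy i (mem_insert_of_mem hi)) (hinj.mono (Set.subset_insert a _))
      fun k => by simpa [sum_insert ha, hca] using hsum k
    intro i hi
    rcases mem_insert.1 hi with rfl | hi
    exacts [hca, hs i hi]

theorem stmt_18_general (p : ℕ) (hp : p.Prime) (S : Type*)
    (l : ℕ) (a : Fin l → MvPolynomial S ℤ) (c : Fin l → ℤ)
    (hne : ∀ i, a i ≠ 0)
    (hdist : ∀ i j : Fin l, i ≠ j → a i ≠ a j ∧ a i ≠ -a j)
    (hsum : ∀ k : ℕ, ∑ i, c i • (a i ^ p ^ k) = 0) :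
    ∀ i, c i = 0 := by
  classical
  obtain ⟨x, hx⟩ := MvPolynomial.exists_forall_eval_ne_zero
    (univ.image a ∪ univ.offDiag.image fun q => a q.1 ^ 2 - a q.2 ^ 2) <| by
      simp only [mem_union, mem_image, mem_univ, true_and, mem_offDiag, Prod.exists, not_or,
        not_exists, not_and, sub_eq_zero, sq_eq_sq_iff_eq_or_eq_neg]
      exact ⟨hne, hdist⟩
  set y : Fin l → ℤ := fun i => MvPolynomial.eval x (a i)
  have hy : ∀ i, y i ≠ 0 := fun i => hx _ (mem_union_left _ (mem_image_of_mem a (mem_univ i)))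
  have hsq : ∀ i j, i ≠ j → y i ^ 2 ≠ y j ^ 2 := fun i j hij h =>
    hx (a i ^ 2 - a j ^ 2) (mem_union_right _ (mem_image.2 ⟨(i, j), by simpa using hij, rfl⟩))
      (by simpa [sub_eq_zero] using h)
  have hinj : Set.InjOn (fun i => ‖(y i : ℝ)‖) (univ : Finset (Fin l)) := by
    intro i _ j _ h
    by_contra hij
    refine hsq i j hij ?_
    simp only [Real.norm_eq_abs, ← Int.cast_abs, Int.cast_inj] at h
    exact (sq_eq_sq_iff_abs_eq_abs _ _).2 h
  have hreal := univ.eq_zero_of_forall_sum_mul_pow_eq_zero (c := fun i => (c i : ℝ))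
    (fun i _ => Int.cast_ne_zero.2 (hy i)) hinj (tendsto_pow_atTop_atTop_of_one_lt hp.one_lt)
    fun k => by simpa [y] using congrArg ((↑) : ℤ → ℝ) (congrArg (MvPolynomial.eval x) (hsum k))
  exact fun i => Int.cast_eq_zero.1 (hreal i (mem_univ i))

theorem stmt_18 (p : ℕ) (hp : p.Prime) (hodd : p ≠ 2) (S : Type*)
    (l : ℕ) (a : Fin l → MvPolynomial S ℤ) (c : Fin l → ℤ)
    (hne : ∀ i, a i ≠ 0)
    (hdist : ∀ i j : Fin l, i ≠ j → a i ≠ a j ∧ a i ≠ -a j)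
    (hsum : ∀ k : ℕ, ∑ i, c i • (a i ^ p ^ k) = 0) :
    ∀ i, c i = 0 :=
  stmt_18_general p hp S l a c hne hdist hsum
end
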